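/- arXiv:2110.15697 — 2 statements merged into one kernel-verified Lean document; each statement's English description precedes it below -/
import Mathlib

section
/- Let ζ_k > 0 and suppose ζ_k^{−1} H^{N−1}(∂Ω_{e_k}) ≤ 1 for all k = 1,…,P. Then for v ∈ H¹(Ω) and V ∈ ℝ^P, the bilinear form B_γ((v,V),(v,V)) = ∫_Ω γ|∇v|² dx + Σ_k ζ_k^{−1}∫_{∂Ω_{e_k}} v² dS − Σ_k ζ_k^{−1}∫_{∂Ω_{e_k}} v V_k dS + Σ_k V_k² satisfies B_γ((v,V),(v,V)) ≥ (1/2)min{1, γ_m}(‖∇v‖₂² + Σ_k ζ_k^{−1}∫_{∂Ω_{e_k}} v² dS + ‖V‖₂²), provided γ ∈ L^∞(Ω) with γ ≥ γ_m > 0 a.e. -/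
open MeasureTheory Set Finset
open scoped ENNReal

/-! The weight bound `γ ≥ γ_m` controls the gradient term from below. On each electrode the cross
term is absorbed by Young's inequality `v V_k ≤ v²/2 + V_k²/2`; integrating the constant `V_k²/2`
over `e_k` costs a factor `H^{N−1}(e_k)`, which the scaling `H^{N−1}(e_k) ≤ ζ_k` removes. What is
left is at least half of the electrode and voltage terms, and `min 1 γ_m` absorbs the rest. -/

section

variable {α : Type*} [MeasurableSpace α]

theorem const_mul_integral_le_integral_mul {μ : Measure α} {f g : α → ℝ} {c : ℝ}
    (hf : Integrable f μ) (hf0 : 0 ≤ᵐ[μ] f) (hg : MemLp g ⊤ μ) (hcg : ∀ᵐ x ∂μ, c ≤ g x) :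
    c * ∫ x, f x ∂μ ≤ ∫ x, g x * f x ∂μ := by
  rw [← integral_const_mul]
  refine integral_mono_ae (hf.const_mul c) (hf.mul_of_top_right hg) ?_
  filter_upwards [hcg, hf0] with x hcx hfx
  exact mul_le_mul_of_nonneg_right hcx hfx

theorem integral_mul_const_le_of_memLp_two {ν : Measure α} [IsFiniteMeasure ν] {v : α → ℝ}
    (hv : MemLp v 2 ν) (c : ℝ) :
    ∫ x, v x * c ∂ν ≤ (1 / 2) * ∫ x, v x ^ 2 ∂ν + (1 / 2) * c ^ 2 * ν.real univ := by
  have hsq := hv.integrable_sq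
  calc ∫ x, v x * c ∂ν ≤ ∫ x, ((1 / 2) * v x ^ 2 + (1 / 2) * c ^ 2) ∂ν :=
        integral_mono ((hv.integrable one_le_two).mul_const c)
          ((hsq.const_mul _).add (integrable_const _))
          fun x => by nlinarith [sq_nonneg (v x - c)]
    _ = _ := by
        rw [integral_add (hsq.const_mul _) (integrable_const _), integral_const_mul,
          integral_const, smul_eq_mul]
        ring

theorem inv_mul_integral_mul_const_le {ν : Measure α} [IsFiniteMeasure ν] {v : α → ℝ}
    (hv : MemLp v 2 ν) {ζ : ℝ} (hζ : 0 < ζ) (hνζ : ν.real univ ≤ ζ) (c : ℝ) :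
    (1 / ζ) * ∫ x, v x * c ∂ν ≤ (1 / 2) * ((1 / ζ) * ∫ x, v x ^ 2 ∂ν + c ^ 2) :=
  calc (1 / ζ) * ∫ x, v x * c ∂ν
      ≤ (1 / ζ) * ((1 / 2) * ∫ x, v x ^ 2 ∂ν + (1 / 2) * c ^ 2 * ν.real univ) :=
        mul_le_mul_of_nonneg_left (integral_mul_const_le_of_memLp_two hv c) (by positivity)
    _ = (1 / 2) * ((1 / ζ) * ∫ x, v x ^ 2 ∂ν + c ^ 2 * (ν.real univ / ζ)) := by ring
    _ ≤ (1 / 2) * ((1 / ζ) * ∫ x, v x ^ 2 ∂ν + c ^ 2) := by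
        gcongr
        exact mul_le_of_le_one_right (sq_nonneg c) ((div_le_one hζ).2 hνζ)

end

theorem stmt9_general {N P : ℕ} (Ω : Set (EuclideanSpace ℝ (Fin N)))
    (e : Fin P → Set (EuclideanSpace ℝ (Fin N)))
    (hefin : ∀ k, μH[(N : ℝ) - 1] (e k) ≠ ∞)
    (ζ : Fin P → ℝ) (hζ : ∀ k, 0 < ζ k)
    (hscale : ∀ k, (μH[(N : ℝ) - 1] (e k)).toReal / ζ k ≤ 1)
    (γm : ℝ) (hγm : 0 < γm)
    (γ : EuclideanSpace ℝ (Fin N) → ℝ)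
    (hγtop : MemLp γ ⊤ (volume.restrict Ω))
    (hγ : ∀ᵐ x ∂(volume.restrict Ω), γm ≤ γ x)
    (v : EuclideanSpace ℝ (Fin N) → ℝ)
    (hvgrad : MemLp (fun x => gradient v x) 2 (volume.restrict Ω))
    (hve : ∀ k, MemLp v 2 ((μH[(N : ℝ) - 1]).restrict (e k)))
    (V : Fin P → ℝ) :
    (1 / 2) * min 1 γm *
        ((∫ x in Ω, ‖gradient v x‖ ^ 2) +
          (∑ k, (1 / ζ k) * ∫ x in e k, (v x) ^ 2 ∂μH[(N : ℝ) - 1]) +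
          ∑ k, (V k) ^ 2) ≤
      (∫ x in Ω, γ x * ‖gradient v x‖ ^ 2) +
        (∑ k, (1 / ζ k) * ∫ x in e k, (v x) ^ 2 ∂μH[(N : ℝ) - 1]) -
        (∑ k, (1 / ζ k) * ∫ x in e k, v x * V k ∂μH[(N : ℝ) - 1]) +
        ∑ k, (V k) ^ 2 := by
  have hgrad : γm * ∫ x in Ω, ‖gradient v x‖ ^ 2 ≤ ∫ x in Ω, γ x * ‖gradient v x‖ ^ 2 :=
    const_mul_integral_le_integral_mul (by simpa using hvgrad.norm.integrable_sq)
      (ae_of_all _ fun x => sq_nonneg _) hγtop hγ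
  have hcross : ∑ k, (1 / ζ k) * ∫ x in e k, v x * V k ∂μH[(N : ℝ) - 1] ≤
      (1 / 2) * ((∑ k, (1 / ζ k) * ∫ x in e k, (v x) ^ 2 ∂μH[(N : ℝ) - 1]) +
        ∑ k, (V k) ^ 2) := by
    rw [← Finset.sum_add_distrib, Finset.mul_sum]
    refine Finset.sum_le_sum fun k _ => ?_
    have := isFiniteMeasure_restrict.2 (hefin k)
    refine inv_mul_integral_mul_const_le (hve k) (hζ k) ?_ (V k)
    rw [measureReal_restrict_apply_univ]
    exact (div_le_one (hζ k)).1 (hscale k)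
  have hG : 0 ≤ ∫ x in Ω, ‖gradient v x‖ ^ 2 := integral_nonneg fun x => sq_nonneg _
  have hS : 0 ≤ ∑ k, (1 / ζ k) * ∫ x in e k, (v x) ^ 2 ∂μH[(N : ℝ) - 1] :=
    Finset.sum_nonneg fun k _ =>
      mul_nonneg (one_div_nonneg.2 (hζ k).le) (integral_nonneg fun x => sq_nonneg _)
  have hW : 0 ≤ ∑ k, (V k) ^ 2 := Finset.sum_nonneg fun k _ => sq_nonneg _
  have hm1 : min 1 γm ≤ 1 := min_le_left _ _
  have hmγ : min 1 γm ≤ γm := min_le_right _ _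
  nlinarith [mul_le_mul_of_nonneg_right hmγ hG, mul_le_mul_of_nonneg_right hm1 (add_nonneg hS hW)]

/-- Coercivity of the complete-electrode-model bilinear form: if
`ζ_k⁻¹ H^{N−1}(∂Ω_{e_k}) ≤ 1` and `γ ≥ γ_m > 0` a.e., then
`B_γ((v,V),(v,V)) ≥ (1/2)min{1,γ_m}(‖∇v‖₂² + Σ_k ζ_k⁻¹∫ v² dS + ‖V‖₂²)`. -/
theorem stmt9 {N P : ℕ} (Ω : Set (EuclideanSpace ℝ (Fin N))) (hΩm : MeasurableSet Ω)
    (hΩb : Bornology.IsBounded Ω)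
    (e : Fin P → Set (EuclideanSpace ℝ (Fin N)))
    (he : ∀ k, e k ⊆ frontier Ω) (hem : ∀ k, MeasurableSet (e k))
    (hefin : ∀ k, μH[(N : ℝ) - 1] (e k) ≠ ∞)
    (ζ : Fin P → ℝ) (hζ : ∀ k, 0 < ζ k)
    (hscale : ∀ k, (μH[(N : ℝ) - 1] (e k)).toReal / ζ k ≤ 1)
    (γm : ℝ) (hγm : 0 < γm)
    (γ : EuclideanSpace ℝ (Fin N) → ℝ)
    (hγtop : MemLp γ ⊤ (volume.restrict Ω))
    (hγ : ∀ᵐ x ∂(volume.restrict Ω), γm ≤ γ x)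
    (v : EuclideanSpace ℝ (Fin N) → ℝ) (hv : Differentiable ℝ v)
    (hv2 : MemLp v 2 (volume.restrict Ω))
    (hvgrad : MemLp (fun x => gradient v x) 2 (volume.restrict Ω))
    (hve : ∀ k, MemLp v 2 ((μH[(N : ℝ) - 1]).restrict (e k)))
    (V : Fin P → ℝ) :
    (1 / 2) * min 1 γm *
        ((∫ x in Ω, ‖gradient v x‖ ^ 2) +
          (∑ k, (1 / ζ k) * ∫ x in e k, (v x) ^ 2 ∂μH[(N : ℝ) - 1]) +
          ∑ k, (V k) ^ 2) ≤
      (∫ x in Ω, γ x * ‖gradient v x‖ ^ 2) +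
        (∑ k, (1 / ζ k) * ∫ x in e k, (v x) ^ 2 ∂μH[(N : ℝ) - 1]) -
        (∑ k, (1 / ζ k) * ∫ x in e k, v x * V k ∂μH[(N : ℝ) - 1]) +
        ∑ k, (V k) ^ 2 :=
  stmt9_general Ω e hefin ζ hζ hscale γm hγm γ hγtop hγ v hvgrad hve V
end

section
/- Under the assumptions of the coercivity lemma (ζ_k^{−1} H^{N−1}(∂Ω_{e_k}) ≤ 1, γ ≥ γ_m > 0 a.e., Ω bounded Lipschitz), any solution (u, I) ∈ H¹(Ω) ⊕ ℝ^P of the weak complete electrode model B_γ((u,I),(v,V)) = L(v,V) for all (v,V), with L(v,V) = Σ_k ζ_k^{−1}∫_{∂Ω_{e_k}} U_k(v − V_k) dS, satisfies ‖(u,I)‖_{ζ*} ≤ (√2/C₁)‖U‖₂, where C₁ = (1/2)min{1,γ_m} and ‖(u,I)‖_{ζ*}² = ‖∇u‖₂² + Σ_k ζ_k^{−1}∫_{∂Ω_{e_k}} u² dS + ‖I‖₂². In particular the bound is independent of γ. -/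
/-!
Test the weak equation with `(v, V) = (u, I)`. By Cauchy–Schwarz on each electrode,
`(ζ_k⁻¹ ∫_{e_k} u)² ≤ (ζ_k⁻¹ |e_k|) ζ_k⁻¹ ∫_{e_k} u² ≤ ζ_k⁻¹ ∫_{e_k} u²`, so the cross terms
`ζ_k⁻¹ I_k ∫_{e_k} u` absorb at most half of the electrode energy and the current energy; with
`γ ≥ γ_m` on the gradient term this gives `B_γ((u,I),(u,I)) ≥ C₁ ‖(u,I)‖²_{ζ*}`. The same
estimate bounds the load by `‖U‖₂ · √2 ‖(u,I)‖_{ζ*}`, and dividing by `‖(u,I)‖_{ζ*}` gives the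
claim.
-/

open MeasureTheory Set Finset
open scoped ENNReal

lemma sqrt_le_div_of_mul_le_mul_sqrt {c S K : ℝ} (hc : 0 < c) (hK : 0 ≤ K)
    (h : c * S ≤ K * √S) : √S ≤ K / c := by
  rcases le_or_gt S 0 with hS | hS
  · rw [Real.sqrt_eq_zero'.mpr hS]
    positivity
  have hsq : √S * √S = S := Real.mul_self_sqrt hS.le
  rw [le_div_iff₀ hc]
  nlinarith [Real.sqrt_pos.mpr hS]

lemma sq_integral_le_measureReal_mul_integral_sq {α : Type*} [MeasurableSpace α]
    {ν : Measure α} [IsFiniteMeasure ν] {u : α → ℝ} (hu : MemLp u 2 ν) :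
    (∫ a, u a ∂ν) ^ 2 ≤ ν.real univ * ∫ a, u a ^ 2 ∂ν := by
  have h1 : MemLp (fun _ : α => (1 : ℝ)) 2 ν := memLp_const 1
  have hcs := real_inner_mul_inner_self_le (hu.toLp u) (h1.toLp _)
  have integral_mul_congr {f g f' g' : α → ℝ} (hf : f =ᵐ[ν] f') (hg : g =ᵐ[ν] g') :
      ∫ a, f a * g a ∂ν = ∫ a, f' a * g' a ∂ν := integral_congr_ae (hf.mul hg)
  simp only [L2.inner_def, RCLike.inner_apply, conj_trivial] at hcs
  rw [integral_mul_congr h1.coeFn_toLp hu.coeFn_toLp,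
    integral_mul_congr hu.coeFn_toLp hu.coeFn_toLp,
    integral_mul_congr h1.coeFn_toLp h1.coeFn_toLp] at hcs
  simpa [sq, mul_comm] using hcs

lemma mul_integral_le_integral_mul_of_ae_le {α : Type*} [MeasurableSpace α] {μ : Measure α}
    {c : ℝ} {γ f : α → ℝ} (hγ : MemLp γ ∞ μ) (hcγ : ∀ᵐ x ∂μ, c ≤ γ x) (hf : Integrable f μ)
    (hf0 : 0 ≤ᵐ[μ] f) : c * ∫ x, f x ∂μ ≤ ∫ x, γ x * f x ∂μ := by
  rw [← integral_const_mul]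
  refine integral_mono_ae (hf.const_mul c) (hf.mul_of_top_right hγ) ?_
  filter_upwards [hcγ, hf0] with x hx hfx
  exact mul_le_mul_of_nonneg_right hx hfx

lemma electrode_flux_sq_le {ζ A B m : ℝ} (hζ : 0 < ζ) (hA : 0 ≤ A) (hB : B ^ 2 ≤ m * A)
    (hm : m / ζ ≤ 1) : (1 / ζ * B) ^ 2 ≤ 1 / ζ * A := by
  have hAζ : 0 ≤ A / ζ := div_nonneg hA hζ.le
  calc (1 / ζ * B) ^ 2 = B ^ 2 / ζ ^ 2 := by ring
    _ ≤ m * A / ζ ^ 2 := by gcongr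
    _ = m / ζ * (A / ζ) := by ring
    _ ≤ 1 * (A / ζ) := by gcongr
    _ = 1 / ζ * A := by ring

section Electrodes

-- For a boundary trace `u` and currents `i`: `A k = ∫_{e_k} u²`, `B k = ∫_{e_k} u`, `m k = |e_k|`.
variable {ι : Type*} [Fintype ι] {ζ A B m i U : ι → ℝ}

lemma electrode_form_coercive (hζ : ∀ k, 0 < ζ k) (hA : ∀ k, 0 ≤ A k)
    (hB : ∀ k, B k ^ 2 ≤ m k * A k) (hm : ∀ k, m k / ζ k ≤ 1) :
    (1 / 2) * ((∑ k, 1 / ζ k * A k) + ∑ k, i k ^ 2) ≤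
      (∑ k, 1 / ζ k * A k) - (∑ k, 1 / ζ k * (B k * i k)) + ∑ k, i k ^ 2 := by
  have hcross : ∀ k, 1 / ζ k * (B k * i k) ≤ (1 / 2) * (1 / ζ k * A k + i k ^ 2) := fun k => by
    nlinarith [electrode_flux_sq_le (hζ k) (hA k) (hB k) (hm k), sq_nonneg (1 / ζ k * B k - i k)]
  have hsum : ∑ k, 1 / ζ k * (B k * i k) ≤ ∑ k, (1 / 2) * (1 / ζ k * A k + i k ^ 2) :=
    Finset.sum_le_sum fun k _ => hcross k
  rw [← Finset.mul_sum, Finset.sum_add_distrib] at hsum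
  linarith

lemma electrode_load_le (hζ : ∀ k, 0 < ζ k) (hA : ∀ k, 0 ≤ A k)
    (hB : ∀ k, B k ^ 2 ≤ m k * A k) (hm0 : ∀ k, 0 ≤ m k) (hm : ∀ k, m k / ζ k ≤ 1) :
    ∑ k, 1 / ζ k * (U k * (B k - m k * i k)) ≤
      √(∑ k, U k ^ 2) * √(2 * ((∑ k, 1 / ζ k * A k) + ∑ k, i k ^ 2)) := by
  set c : ι → ℝ := fun k => 1 / ζ k * B k - m k / ζ k * i k
  have hc : ∀ k, c k ^ 2 ≤ 2 * (1 / ζ k * A k + i k ^ 2) := fun k => by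
    have hs0 : 0 ≤ m k / ζ k := div_nonneg (hm0 k) (hζ k).le
    have hs : (m k / ζ k) ^ 2 * i k ^ 2 ≤ i k ^ 2 :=
      mul_le_of_le_one_left (sq_nonneg _) (pow_le_one₀ hs0 (hm k))
    nlinarith [electrode_flux_sq_le (hζ k) (hA k) (hB k) (hm k),
      sq_nonneg (1 / ζ k * B k + m k / ζ k * i k)]
  calc ∑ k, 1 / ζ k * (U k * (B k - m k * i k)) = ∑ k, U k * c k := by
        refine Finset.sum_congr rfl fun k _ => ?_
        simp only [c]
        ring
    _ ≤ √(∑ k, U k ^ 2) * √(∑ k, c k ^ 2) := Real.sum_mul_le_sqrt_mul_sqrt _ _ _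
    _ ≤ √(∑ k, U k ^ 2) * √(2 * ((∑ k, 1 / ζ k * A k) + ∑ k, i k ^ 2)) := by
        gcongr
        rw [← Finset.sum_add_distrib, Finset.mul_sum]
        exact Finset.sum_le_sum fun k _ => hc k

lemma sqrt_cem_energy_le {γm T G : ℝ} (hγm : 0 < γm) (hG : 0 ≤ G) (hT : γm * G ≤ T)
    (hζ : ∀ k, 0 < ζ k) (hA : ∀ k, 0 ≤ A k) (hB : ∀ k, B k ^ 2 ≤ m k * A k)
    (hm0 : ∀ k, 0 ≤ m k) (hm : ∀ k, m k / ζ k ≤ 1)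
    (henergy : T + (∑ k, 1 / ζ k * A k) - (∑ k, 1 / ζ k * (B k * i k)) + ∑ k, i k ^ 2 =
      ∑ k, 1 / ζ k * (U k * (B k - m k * i k))) :
    √(G + (∑ k, 1 / ζ k * A k) + ∑ k, i k ^ 2) ≤
      (√2 / ((1 / 2) * min 1 γm)) * √(∑ k, U k ^ 2) := by
  set Q := ∑ k, 1 / ζ k * A k
  set R := ∑ k, i k ^ 2
  have hQ : 0 ≤ Q := Finset.sum_nonneg fun k _ => mul_nonneg (one_div_nonneg.mpr (hζ k).le) (hA k)
  have hR : 0 ≤ R := Finset.sum_nonneg fun k _ => sq_nonneg _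
  have hcoercive :
      (1 / 2) * min 1 γm * (G + Q + R) ≤ ∑ k, 1 / ζ k * (U k * (B k - m k * i k)) := by
    nlinarith [electrode_form_coercive (i := i) hζ hA hB hm, min_le_left 1 γm, min_le_right 1 γm,
      mul_le_mul_of_nonneg_right (min_le_right 1 γm) hG,
      mul_le_mul_of_nonneg_right (min_le_left 1 γm) (add_nonneg hQ hR)]
  have hload :
      ∑ k, 1 / ζ k * (U k * (B k - m k * i k)) ≤ √2 * √(∑ k, U k ^ 2) * √(G + Q + R) := by
    calc _ ≤ √(∑ k, U k ^ 2) * √(2 * (Q + R)) := electrode_load_le hζ hA hB hm0 hm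
      _ ≤ √(∑ k, U k ^ 2) * √(2 * (G + Q + R)) := by gcongr; linarith
      _ = √2 * √(∑ k, U k ^ 2) * √(G + Q + R) := by rw [Real.sqrt_mul zero_le_two]; ring
  rw [div_mul_eq_mul_div]
  exact sqrt_le_div_of_mul_le_mul_sqrt (by positivity) (by positivity) (hcoercive.trans hload)

end Electrodes

theorem stmt10_general {N P : ℕ} (Ω : Set (EuclideanSpace ℝ (Fin N)))
    (e : Fin P → Set (EuclideanSpace ℝ (Fin N)))
    (hefin : ∀ k, μH[(N : ℝ) - 1] (e k) ≠ ∞)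
    (ζ : Fin P → ℝ) (hζ : ∀ k, 0 < ζ k)
    (hscale : ∀ k, (μH[(N : ℝ) - 1] (e k)).toReal / ζ k ≤ 1)
    (γm : ℝ) (hγm : 0 < γm)
    (γ : EuclideanSpace ℝ (Fin N) → ℝ)
    (hγtop : MemLp γ ⊤ (volume.restrict Ω))
    (hγ : ∀ᵐ x ∂(volume.restrict Ω), γm ≤ γ x)
    (U : Fin P → ℝ)
    (u : EuclideanSpace ℝ (Fin N) → ℝ) (I : Fin P → ℝ)
    (hu : Differentiable ℝ u)
    (hugrad : MemLp (fun x => gradient u x) 2 (volume.restrict Ω))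
    (hue : ∀ k, MemLp u 2 ((μH[(N : ℝ) - 1]).restrict (e k)))
    (hsol : ∀ (v : EuclideanSpace ℝ (Fin N) → ℝ) (V : Fin P → ℝ), Differentiable ℝ v →
      (∫ x in Ω, γ x * inner (𝕜 := ℝ) (gradient u x) (gradient v x)) +
          (∑ k, (1 / ζ k) * ∫ x in e k, u x * v x ∂μH[(N : ℝ) - 1]) -
          (∑ k, (1 / ζ k) * ∫ x in e k, u x * V k ∂μH[(N : ℝ) - 1]) +
          (∑ k, I k * V k) =
        ∑ k, (1 / ζ k) * ∫ x in e k, U k * (v x - V k) ∂μH[(N : ℝ) - 1]) :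
    Real.sqrt ((∫ x in Ω, ‖gradient u x‖ ^ 2) +
        (∑ k, (1 / ζ k) * ∫ x in e k, (u x) ^ 2 ∂μH[(N : ℝ) - 1]) +
        ∑ k, (I k) ^ 2) ≤
      (Real.sqrt 2 / ((1 / 2) * min 1 γm)) * Real.sqrt (∑ k, (U k) ^ 2) := by
  have hfin : ∀ k, IsFiniteMeasure ((μH[(N : ℝ) - 1]).restrict (e k)) := fun k =>
    isFiniteMeasure_restrict.mpr (hefin k)
  have hload_integral : ∀ k, ∫ x in e k, U k * (u x - I k) ∂μH[(N : ℝ) - 1] =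
      U k * ((∫ x in e k, u x ∂μH[(N : ℝ) - 1]) - (μH[(N : ℝ) - 1] (e k)).toReal * I k) := by
    intro k
    rw [integral_const_mul, integral_sub ((hue k).integrable one_le_two) (integrable_const _),
      setIntegral_const, smul_eq_mul, Measure.real]
  have henergy := hsol u I hu
  simp only [← pow_two, integral_mul_const, hload_integral, real_inner_self_eq_norm_sq] at henergy
  refine sqrt_cem_energy_le hγm (integral_nonneg fun _ => sq_nonneg _) ?_ hζ
    (fun _ => integral_nonneg fun _ => sq_nonneg _) (fun k => ?_) (fun _ => ENNReal.toReal_nonneg)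
    hscale henergy
  · exact mul_integral_le_integral_mul_of_ae_le hγtop hγ
      ((memLp_two_iff_integrable_sq_norm hugrad.1).mp hugrad)
      (Filter.Eventually.of_forall fun _ => sq_nonneg _)
  · have hcs := sq_integral_le_measureReal_mul_integral_sq (hue k)
    rwa [measureReal_restrict_apply_univ] at hcs

/-- A-priori bound for the complete electrode model: under the coercivity assumptions
(`ζ_k⁻¹ H^{N−1}(∂Ω_{e_k}) ≤ 1`, `γ ≥ γ_m > 0` a.e.), any weak solution `(u, I)` of
`B_γ((u,I),(v,V)) = L(v,V)` satisfies `‖(u,I)‖_{ζ*} ≤ (√2/C₁)‖U‖₂` with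
`C₁ = (1/2)min{1,γ_m}`; in particular the bound is independent of `γ`. -/
theorem stmt10 {N P : ℕ} (Ω : Set (EuclideanSpace ℝ (Fin N))) (hΩm : MeasurableSet Ω)
    (hΩb : Bornology.IsBounded Ω)
    (e : Fin P → Set (EuclideanSpace ℝ (Fin N)))
    (he : ∀ k, e k ⊆ frontier Ω) (hem : ∀ k, MeasurableSet (e k))
    (hefin : ∀ k, μH[(N : ℝ) - 1] (e k) ≠ ∞)
    (ζ : Fin P → ℝ) (hζ : ∀ k, 0 < ζ k)
    (hscale : ∀ k, (μH[(N : ℝ) - 1] (e k)).toReal / ζ k ≤ 1)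
    (γm : ℝ) (hγm : 0 < γm)
    (γ : EuclideanSpace ℝ (Fin N) → ℝ)
    (hγtop : MemLp γ ⊤ (volume.restrict Ω))
    (hγ : ∀ᵐ x ∂(volume.restrict Ω), γm ≤ γ x)
    (U : Fin P → ℝ)
    (u : EuclideanSpace ℝ (Fin N) → ℝ) (I : Fin P → ℝ)
    (hu : Differentiable ℝ u)
    (hu2 : MemLp u 2 (volume.restrict Ω))
    (hugrad : MemLp (fun x => gradient u x) 2 (volume.restrict Ω))
    (hue : ∀ k, MemLp u 2 ((μH[(N : ℝ) - 1]).restrict (e k)))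
    (hsol : ∀ (v : EuclideanSpace ℝ (Fin N) → ℝ) (V : Fin P → ℝ), Differentiable ℝ v →
      (∫ x in Ω, γ x * inner (𝕜 := ℝ) (gradient u x) (gradient v x)) +
          (∑ k, (1 / ζ k) * ∫ x in e k, u x * v x ∂μH[(N : ℝ) - 1]) -
          (∑ k, (1 / ζ k) * ∫ x in e k, u x * V k ∂μH[(N : ℝ) - 1]) +
          (∑ k, I k * V k) =
        ∑ k, (1 / ζ k) * ∫ x in e k, U k * (v x - V k) ∂μH[(N : ℝ) - 1]) :
    Real.sqrt ((∫ x in Ω, ‖gradient u x‖ ^ 2) +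
        (∑ k, (1 / ζ k) * ∫ x in e k, (u x) ^ 2 ∂μH[(N : ℝ) - 1]) +
        ∑ k, (I k) ^ 2) ≤
      (Real.sqrt 2 / ((1 / 2) * min 1 γm)) * Real.sqrt (∑ k, (U k) ^ 2) :=
  stmt10_general Ω e hefin ζ hζ hscale γm hγm γ hγtop hγ U u I hu hugrad hue hsol
end
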